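/- Let n ≥ 2, let 2 ≤ k ≤ n, α > 0 and N₀ > 0. For every ε₀ ∈ (0, 1) there exists a constant Λ > 0, depending only on n, k, α, N₀ and ε₀, with the following property: whenever λ = (λ₁,…,λ_n) ∈ Γ_k satisfies λ₁ ≥ λ₂ ≥ ⋯ ≥ λ_n, S_k(λ) ≤ N₀ and λ₁ ≥ Λ, then S_k(λ) > (1 − ε₀) λ₁ S_k^{11}(λ). -/

import Mathlib

/-!
Write `λ = (λ₁, μ)` with `μ = λ|1`, so that `σ_j(λ) = λ₁ σ_{j-1}(μ) + σ_j(μ)`. Newton's inequality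
`σ_j σ_{j+2} ≤ σ_{j+1}²` holds for every real vector: differentiating `∏ (X + μ_i)` until
`σ_j, σ_{j+1}, σ_{j+2}` become the three lowest coefficients of a real-rooted polynomial reduces it
to `2 e_d e_{d+2} ≤ e_{d+1}²` for `d + 2` numbers, which follows by induction on `d`. With
`λ ∈ Γ_k` and `λ₁ > 0` it gives `σ_j(μ) > 0` for `j ≤ k - 1` and
`σ_{k-1}(μ)^{k-2} ≤ σ_{k-2}(μ)^{k-1}`.

Since `S_k(λ) > α λ₁ σ_{k-2}(μ)`, the bound `S_k ≤ N₀` forces `σ_{k-2}(μ) < (ε₀ α)^{k-2}` once `λ₁`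
is large, hence `σ_{k-1}(μ) < ε₀ α σ_{k-2}(μ)`. In
`S_k(λ) - (1 - ε₀) λ₁ S_k^{11}(λ) = σ_k(μ) + ε₀ λ₁ σ_{k-1}(μ) + ε₀ α λ₁ σ_{k-2}(μ) + α σ_{k-1}(μ)`
the only possibly negative term, `σ_k(μ) > -λ₁ σ_{k-1}(μ)`, is then absorbed by
`ε₀ α λ₁ σ_{k-2}(μ)`.
-/

open scoped BigOperators

/-- The `k`-th elementary symmetric polynomial `σ_k(λ)` of `λ ∈ ℝⁿ`, indexed by `k : ℤ`,
with the conventions `σ₀ = 1` and `σ_k = 0` for `k < 0` or `k > n`. -/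
noncomputable def esymmZ (n : ℕ) (k : ℤ) (lam : Fin n → ℝ) : ℝ :=
  if k < 0 then 0 else ∑ s ∈ Finset.univ.powersetCard k.toNat, ∏ i ∈ s, lam i

/-- `S_k(λ) := σ_k(λ) + α σ_{k-1}(λ)`. -/
noncomputable def SZ (n : ℕ) (α : ℝ) (k : ℤ) (lam : Fin n → ℝ) : ℝ :=
  esymmZ n k lam + α * esymmZ n (k - 1) lam

/-- The Garding cone `Γ_m = {λ ∈ ℝⁿ : σ_j(λ) > 0 for j = 1,…,m}` (so `Γ₀ = ℝⁿ`). -/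
def Gamma (n : ℕ) (m : ℕ) : Set (Fin n → ℝ) :=
  {lam | ∀ j : ℕ, 1 ≤ j → j ≤ m → 0 < esymmZ n j lam}

/-- `Γ̃_k := Γ_{k-1} ∩ {λ : S_k(λ) > 0}`. -/
def GammaTilde (n : ℕ) (α : ℝ) (k : ℕ) : Set (Fin n → ℝ) :=
  Gamma n (k - 1) ∩ {lam | 0 < SZ n α k lam}

/-- `σ_k(λ|i)`: the `k`-th elementary symmetric polynomial of the vector obtained
from `λ` by deleting the entry `λ_i`. -/
noncomputable def esymmDel (n : ℕ) (k : ℤ) (lam : Fin n → ℝ) (i : Fin n) : ℝ :=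
  if k < 0 then 0 else
    ∑ s ∈ (Finset.univ.erase i).powersetCard k.toNat, ∏ j ∈ s, lam j

/-- `S_k(λ|i) := σ_k(λ|i) + α σ_{k-1}(λ|i)`.  In particular
`S_k^{ii}(λ) = ∂S_k/∂λ_i = S_{k-1}(λ|i) = SDel n α (k-1) lam i`. -/
noncomputable def SDel (n : ℕ) (α : ℝ) (k : ℤ) (lam : Fin n → ℝ) (i : Fin n) : ℝ :=
  esymmDel n k lam i + α * esymmDel n (k - 1) lam i

/-- `σ_k(λ|pq)`: the `k`-th elementary symmetric polynomial of the vector obtained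
from `λ` by deleting the entries `λ_p` and `λ_q`. -/
noncomputable def esymmDel2 (n : ℕ) (k : ℤ) (lam : Fin n → ℝ) (p q : Fin n) : ℝ :=
  if k < 0 then 0 else
    ∑ s ∈ ((Finset.univ.erase p).erase q).powersetCard k.toNat, ∏ l ∈ s, lam l

/-- `S_k^{pp,qq}(λ) = ∂²S_k/∂λ_p∂λ_q`, which equals
`σ_{k-2}(λ|pq) + α σ_{k-3}(λ|pq)` for `p ≠ q`, and `0` for `p = q`. -/
noncomputable def Spq (n : ℕ) (α : ℝ) (k : ℤ) (lam : Fin n → ℝ) (p q : Fin n) : ℝ :=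
  if p = q then 0 else esymmDel2 n (k - 2) lam p q + α * esymmDel2 n (k - 3) lam p q

open Polynomial

namespace Multiset

variable {R : Type*}

@[simp]
theorem esymm_zero [CommSemiring R] (s : Multiset R) : s.esymm 0 = 1 := by
  simp [esymm]

theorem esymm_cons [CommSemiring R] (a : R) (s : Multiset R) (j : ℕ) :
    (a ::ₘ s).esymm (j + 1) = a * s.esymm j + s.esymm (j + 1) := by
  simp only [esymm, powersetCard_cons, map_add, sum_add, map_map, Function.comp_def, prod_cons,
    sum_map_mul_left, add_comm]

theorem esymm_eq_zero_of_card_lt [CommSemiring R] {s : Multiset R} {j : ℕ} (h : card s < j) :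
    s.esymm j = 0 := by
  simp [esymm, powersetCard_eq_empty _ h]

theorem two_mul_esymm_mul_esymm_le_sq [CommRing R] [LinearOrder R] [IsStrictOrderedRing R]
    {s : Multiset R} {d : ℕ} (hs : card s = d + 2) :
    2 * s.esymm d * s.esymm (d + 2) ≤ s.esymm (d + 1) ^ 2 := by
  induction d generalizing s with
  | zero =>
    obtain ⟨x, y, rfl⟩ := card_eq_two.mp hs
    simp only [zero_add, insert_eq_cons, esymm_zero, esymm_pair_one, esymm_pair_two]
    nlinarith [sq_nonneg x, sq_nonneg y]
  | succ d ih =>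
    obtain ⟨a, ha⟩ := card_pos_iff_exists_mem.mp (by omega : 0 < card s)
    obtain ⟨t, rfl⟩ := exists_cons_of_mem ha
    have ht : card t = d + 2 := by simpa using hs
    rw [esymm_cons, esymm_cons, esymm_cons, esymm_eq_zero_of_card_lt (by omega : card t < d + 3)]
    nlinarith [mul_nonneg (sq_nonneg a) (sub_nonneg.mpr (ih ht)), sq_nonneg (t.esymm (d + 2))]

end Multiset

namespace Polynomial

theorem Splits.derivative {p : ℝ[X]} (hp : p.Splits) : (derivative p).Splits := by
  rw [splits_iff_card_roots] at hp ⊢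
  have := card_roots_le_derivative p
  have := card_roots' (Polynomial.derivative p)
  have := natDegree_derivative_le p
  omega

theorem Splits.iterate_derivative {p : ℝ[X]} (hp : p.Splits) (c : ℕ) :
    (Polynomial.derivative^[c] p).Splits := by
  induction c with
  | zero => exact hp
  | succ c ih => rw [Function.iterate_succ_apply']; exact ih.derivative

theorem Splits.two_mul_coeff_zero_mul_coeff_two_le_sq {p : ℝ[X]} (hp : p.Splits) :
    2 * p.coeff 0 * p.coeff 2 ≤ p.coeff 1 ^ 2 := by
  rcases lt_or_ge p.natDegree 2 with hlt | hge
  · rw [coeff_eq_zero_of_natDegree_lt hlt]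
    nlinarith [sq_nonneg (p.coeff 1)]
  obtain ⟨d, hd⟩ := Nat.exists_eq_add_of_le' hge
  have hcoeff (i : ℕ) (hi : i ≤ 2) := coeff_eq_esymm_roots_of_splits hp (k := i) (by omega)
  have hedge := Multiset.two_mul_esymm_mul_esymm_le_sq (hp.natDegree_eq_card_roots ▸ hd)
  rw [hcoeff 0 (by norm_num), hcoeff 1 (by norm_num), hcoeff 2 (by norm_num), hd,
    show d + 2 - 1 = d + 1 by omega, Nat.add_sub_cancel, Nat.sub_zero, pow_succ, pow_succ]
  nlinarith [mul_le_mul_of_nonneg_left hedge (sq_nonneg (p.leadingCoeff * (-1) ^ d))]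

end Polynomial

namespace Multiset

theorem factorial_mul_coeff_iterate_derivative_prod_X_add_C (s : Multiset ℝ) {j c i : ℕ}
    (hc : card s = j + 2 + c) (hi : i ≤ j + 2) :
    (i.factorial : ℝ) * (derivative^[c] (s.map (X + C ·)).prod).coeff i
      = ((i + c).factorial : ℝ) * s.esymm (j + 2 - i) := by
  rw [coeff_iterate_derivative, nsmul_eq_mul, prod_X_add_C_coeff s (by omega), hc,
    ← Nat.factorial_mul_descFactorial (show c ≤ i + c by omega), Nat.add_sub_cancel,
    show j + 2 + c - (i + c) = j + 2 - i by omega]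
  push_cast
  ring

theorem esymm_mul_esymm_le_sq (s : Multiset ℝ) (j : ℕ) :
    s.esymm j * s.esymm (j + 2) ≤ s.esymm (j + 1) ^ 2 := by
  rcases lt_or_ge (card s) (j + 2) with hlt | hge
  · rw [esymm_eq_zero_of_card_lt hlt, mul_zero]
    positivity
  obtain ⟨c, hc⟩ := Nat.exists_eq_add_of_le hge
  -- Differentiating `c` times leaves a real-rooted polynomial whose three lowest coefficients
  -- are proportional to `σ_{j+2}, σ_{j+1}, σ_j`.
  set q := derivative^[c] (s.map (X + C ·)).prod
  have hcoeff (i : ℕ) (hi : i ≤ 2) :=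
    factorial_mul_coeff_iterate_derivative_prod_X_add_C s hc (i := i) (by omega)
  have h₀ : q.coeff 0 = c.factorial * s.esymm (j + 2) := by simpa using hcoeff 0 (by norm_num)
  have h₁ : q.coeff 1 = (c + 1) * c.factorial * s.esymm (j + 1) := by
    simpa [add_comm 1 c, Nat.factorial_succ] using hcoeff 1 (by norm_num)
  have h₂ : 2 * q.coeff 2 = (c + 2) * (c + 1) * c.factorial * s.esymm j := by
    have h := hcoeff 2 le_rfl
    rw [show 2 + c = c + 1 + 1 by omega, Nat.factorial_succ (c + 1), Nat.factorial_succ c] at h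
    push_cast [Nat.factorial] at h
    linear_combination h
  have hq : 2 * q.coeff 0 * q.coeff 2 ≤ q.coeff 1 ^ 2 :=
    ((Splits.multisetProd (by simp)).iterate_derivative c).two_mul_coeff_zero_mul_coeff_two_le_sq
  have hF : (0 : ℝ) < c.factorial := mod_cast c.factorial_pos
  have hnewton : (c + 2) * (s.esymm j * s.esymm (j + 2)) ≤ (c + 1) * s.esymm (j + 1) ^ 2 := by
    refine le_of_mul_le_mul_left ?_ (by positivity : (0 : ℝ) < (c + 1) * c.factorial ^ 2)
    rw [h₀, h₁] at hq
    linear_combination hq - (c.factorial * s.esymm (j + 2)) * h₂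
  nlinarith [sq_nonneg (s.esymm (j + 1))]

theorem esymm_pos_of_esymm_cons_pos {a : ℝ} {s : Multiset ℝ} {m : ℕ}
    (h : ∀ j ≤ m, 0 < (a ::ₘ s).esymm (j + 1)) : ∀ j ≤ m, 0 < s.esymm j := by
  intro j hj
  induction j with
  | zero => simp
  | succ j ih =>
    have hj₀ := ih (by omega)
    have hj₁ := h j (by omega)
    have hj₂ := h (j + 1) hj
    rw [esymm_cons] at hj₁ hj₂
    -- if `σ_{j+1} ≤ 0`, then `σ_j σ_{j+2} > -a σ_j σ_{j+1} ≥ σ_{j+1}²`, against Newton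
    by_contra! hle
    nlinarith [esymm_mul_esymm_le_sq s j, mul_pos hj₀ hj₂, mul_nonneg (neg_nonneg.mpr hle) hj₁.le]

end Multiset

section OrderedRing

variable {R : Type*} [CommRing R] [LinearOrder R] [IsStrictOrderedRing R]

theorem pow_le_pow_of_mul_le_sq {f : ℕ → R} {m : ℕ} (h₀ : f 0 = 1) (hpos : ∀ j ≤ m, 0 < f j)
    (hf : ∀ j, f j * f (j + 2) ≤ f (j + 1) ^ 2) : ∀ j < m, f (j + 1) ^ j ≤ f j ^ (j + 1) := by
  intro j hj
  induction j with
  | zero => simp [h₀]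
  | succ j ih =>
    have hj₀ := hpos j (by omega)
    have key : f j ^ (j + 1) * f (j + 2) ^ (j + 1) ≤ f j ^ (j + 1) * f (j + 1) ^ (j + 2) :=
      calc f j ^ (j + 1) * f (j + 2) ^ (j + 1)
          = (f j * f (j + 2)) ^ (j + 1) := (mul_pow _ _ _).symm
        _ ≤ (f (j + 1) ^ 2) ^ (j + 1) :=
          pow_le_pow_left₀ (mul_pos hj₀ (hpos (j + 2) (by omega))).le (hf j) _
        _ = f (j + 1) ^ (j + 2) * f (j + 1) ^ j := by ring
        _ ≤ f (j + 1) ^ (j + 2) * f j ^ (j + 1) :=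
          mul_le_mul_of_nonneg_left (ih (by omega)) (pow_pos (hpos (j + 1) (by omega)) _).le
        _ = f j ^ (j + 1) * f (j + 1) ^ (j + 2) := mul_comm _ _
    exact le_of_mul_le_mul_left key (pow_pos hj₀ _)

theorem lt_mul_of_pow_le_pow_succ {a b r : R} {m : ℕ} (ha : 0 < a) (hr : 0 ≤ r)
    (hab : b ^ m ≤ a ^ (m + 1)) (har : a < r ^ m) : b < r * a := by
  refine lt_of_pow_lt_pow_left₀ m (mul_nonneg hr ha.le) ?_
  calc b ^ m ≤ a ^ (m + 1) := hab
    _ = a ^ m * a := pow_succ a m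
    _ < a ^ m * r ^ m := mul_lt_mul_of_pos_left har (pow_pos ha m)
    _ = (r * a) ^ m := by ring

end OrderedRing

section MultisetForm

open Finset

variable {n : ℕ} (lam : Fin n → ℝ)

theorem map_univ_val_eq_cons (i : Fin n) :
    univ.val.map lam = lam i ::ₘ (univ.erase i).val.map lam := by
  rw [← Multiset.map_cons, erase_val, Multiset.cons_erase (mem_univ_val i)]

theorem esymmZ_natCast (j : ℕ) : esymmZ n j lam = (univ.val.map lam).esymm j := by
  rw [esymmZ, if_neg (by omega), Int.toNat_natCast, esymm_map_val]

theorem esymmDel_natCast (j : ℕ) (i : Fin n) :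
    esymmDel n j lam i = ((univ.erase i).val.map lam).esymm j := by
  rw [esymmDel, if_neg (by omega), Int.toNat_natCast, esymm_map_val]

theorem SZ_natCast_succ (α : ℝ) (j : ℕ) :
    SZ n α (j + 1 : ℕ) lam =
      (univ.val.map lam).esymm (j + 1) + α * (univ.val.map lam).esymm j := by
  rw [SZ, show ((j + 1 : ℕ) : ℤ) - 1 = j by push_cast; ring, esymmZ_natCast, esymmZ_natCast]

theorem SDel_natCast_succ (α : ℝ) (j : ℕ) (i : Fin n) :
    SDel n α (j + 1 : ℕ) lam i = ((univ.erase i).val.map lam).esymm (j + 1)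
      + α * ((univ.erase i).val.map lam).esymm j := by
  rw [SDel, show ((j + 1 : ℕ) : ℤ) - 1 = j by push_cast; ring, esymmDel_natCast, esymmDel_natCast]

end MultisetForm

theorem Sk_gt_one_sub_eps_lam1_Sk11
    (n : ℕ) (k : ℕ) (hk1 : 2 ≤ k) (hk : k ≤ n)
    (α : ℝ) (hα : 0 < α) (N₀ : ℝ) :
    ∀ ε₀ : ℝ, 0 < ε₀ → ε₀ < 1 →
      ∃ Λ : ℝ, 0 < Λ ∧
        ∀ lam : Fin n → ℝ, lam ∈ Gamma n k → Antitone lam → SZ n α k lam ≤ N₀ →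
          Λ ≤ lam ⟨0, by omega⟩ →
          SZ n α k lam >
            (1 - ε₀) * lam ⟨0, by omega⟩ * SDel n α ((k : ℤ) - 1) lam ⟨0, by omega⟩ := by
  intro ε hε _
  obtain ⟨m, rfl⟩ : ∃ m, k = m + 2 := ⟨k - 2, by omega⟩
  refine ⟨max 1 (N₀ / (α * (ε * α) ^ m)), lt_max_of_lt_left one_pos, ?_⟩
  intro lam hΓ _ hS hΛ
  set i₀ : Fin n := ⟨0, by omega⟩
  rw [show ((m + 2 : ℕ) : ℤ) - 1 = (m + 1 : ℕ) by push_cast; ring, SDel_natCast_succ]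
  rw [SZ_natCast_succ, map_univ_val_eq_cons lam i₀] at hS ⊢
  set t := lam i₀
  set μ := (Finset.univ.erase i₀).val.map lam
  have ht : 0 < t := lt_of_lt_of_le (lt_max_of_lt_left one_pos) hΛ
  have hσ : ∀ j ≤ m + 1, 0 < (t ::ₘ μ).esymm (j + 1) := fun j hj => by
    rw [← map_univ_val_eq_cons, ← esymmZ_natCast]
    exact hΓ (j + 1) (by omega) (by omega)
  have hμ := Multiset.esymm_pos_of_esymm_cons_pos hσ
  have hchain := pow_le_pow_of_mul_le_sq μ.esymm_zero hμ μ.esymm_mul_esymm_le_sq m (by omega)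
  have hσk := hσ (m + 1) le_rfl
  simp only [Multiset.esymm_cons] at hS hσk ⊢
  have ha := hμ m (by omega)
  have hb := hμ (m + 1) le_rfl
  have haP : μ.esymm m < (ε * α) ^ m := by
    have hN : N₀ ≤ α * (ε * α) ^ m * t :=
      (div_le_iff₀' (by positivity)).mp (le_of_max_le_right hΛ)
    have : α * t * μ.esymm m < α * t * (ε * α) ^ m := by nlinarith [mul_pos hα hb]
    exact lt_of_mul_lt_mul_left this (by positivity)
  have hba := lt_mul_of_pow_le_pow_succ ha (by positivity) hchain haP
  nlinarith [mul_lt_mul_of_pos_left hba ht, mul_pos hα hb, mul_pos hε (mul_pos ht hb)]
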